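/- arXiv:2412.20854 — 8 statements merged into one kernel-verified Lean document; each statement's English description precedes it below -/
import Mathlib

section
/- Let ψ, φ : ℝ → (Fin N → ℂ) be two differentiable solutions of the nonlinear Schrödinger equation (with the same Hermitian Hamiltonian H, the same Hermitian matrices A_j, and the same functions f_j). Then for every t, the derivative of the overlap t ↦ ⟨ψ(t)|φ(t)⟩ satisfies d/dt ⟨ψ(t)|φ(t)⟩ = i · Σ_{j=0}^{N-1} [ f_j(|Σ_ℓ conj(ψ_ℓ(t))·(A_j)_{ℓ j}|) − f_j(|Σ_ℓ conj(φ_ℓ(t))·(A_j)_{ℓ j}|) ] · conj(ψ_j(t)) · φ_j(t). -/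
open scoped BigOperators ComplexConjugate

/-!
Write the two equations as `ψ' = -i (H ψ + V ψ)` and `φ' = -i (H φ + W φ)` with real diagonal
potentials `V, W`. In `⟨ψ'|φ⟩ + ⟨ψ|φ'⟩` the Hamiltonian contributes `i (⟨Hψ|φ⟩ - ⟨ψ|Hφ⟩)`, which
vanishes because `H` is Hermitian, while the real potentials contribute `i ⟨ψ|(V - W) φ⟩`.
-/

open Matrix

theorem Matrix.IsHermitian.star_mulVec_dotProduct {ι R : Type*} [Fintype ι] [CommSemiring R]
    [StarRing R] {H : Matrix ι ι R} (hH : H.IsHermitian) (ψ φ : ι → R) :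
    star (H *ᵥ ψ) ⬝ᵥ φ = star ψ ⬝ᵥ (H *ᵥ φ) := by
  rw [star_mulVec, hH.eq, dotProduct_mulVec]

theorem hasDerivAt_sum_conj_mul {ι : Type*} [Fintype ι] {ψ φ : ℝ → ι → ℂ} {ψ' φ' : ι → ℂ}
    {t : ℝ} (hψ : ∀ j, HasDerivAt (fun s => ψ s j) (ψ' j) t)
    (hφ : ∀ j, HasDerivAt (fun s => φ s j) (φ' j) t) :
    HasDerivAt (fun s => ∑ j, conj (ψ s j) * φ s j)
      (∑ j, (conj (ψ' j) * φ t j + conj (ψ t j) * φ' j)) t :=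
  HasDerivAt.fun_sum fun j _ => (hψ j).star.mul (hφ j)

theorem sum_conj_deriv_mul_add_conj_mul_deriv {ι : Type*} [Fintype ι]
    {H : Matrix ι ι ℂ} (hH : H.IsHermitian) {V W : ι → ℝ} {ψ φ ψ' φ' : ι → ℂ}
    (hψ : ∀ j, Complex.I * ψ' j = (∑ l, H j l * ψ l) + (V j : ℂ) * ψ j)
    (hφ : ∀ j, Complex.I * φ' j = (∑ l, H j l * φ l) + (W j : ℂ) * φ j) :
    ∑ j, (conj (ψ' j) * φ j + conj (ψ j) * φ' j) =
      Complex.I * ∑ j, ((V j - W j : ℝ) : ℂ) * (conj (ψ j) * φ j) := by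
  have hψ' : ∀ j, conj (ψ' j) = Complex.I * (conj (∑ l, H j l * ψ l) + V j * conj (ψ j)) := by
    intro j
    have h := congrArg conj (hψ j)
    simp only [map_mul, map_add, Complex.conj_I, Complex.conj_ofReal] at h
    linear_combination Complex.I * h + conj (ψ' j) * Complex.I_sq
  have hφ' : ∀ j, φ' j = -Complex.I * ((∑ l, H j l * φ l) + W j * φ j) := fun j => by
    linear_combination -Complex.I * hφ j + φ' j * Complex.I_sq
  have hHermitian : ∑ j, conj (∑ l, H j l * ψ l) * φ j = ∑ j, conj (ψ j) * ∑ l, H j l * φ l :=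
    hH.star_mulVec_dotProduct ψ φ
  calc ∑ j, (conj (ψ' j) * φ j + conj (ψ j) * φ' j)
      = ∑ j, Complex.I * (conj (∑ l, H j l * ψ l) * φ j - conj (ψ j) * ∑ l, H j l * φ l
          + ((V j - W j : ℝ) : ℂ) * (conj (ψ j) * φ j)) :=
        Finset.sum_congr rfl fun j _ => by rw [hψ', hφ']; push_cast; ring
    _ = Complex.I * ((∑ j, conj (∑ l, H j l * ψ l) * φ j) - (∑ j, conj (ψ j) * ∑ l, H j l * φ l)
          + ∑ j, ((V j - W j : ℝ) : ℂ) * (conj (ψ j) * φ j)) := by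
        rw [← Finset.mul_sum, Finset.sum_add_distrib, Finset.sum_sub_distrib]
    _ = Complex.I * ∑ j, ((V j - W j : ℝ) : ℂ) * (conj (ψ j) * φ j) := by
        rw [hHermitian, sub_self, zero_add]

theorem overlap_derivative_general
    {N : ℕ}
    (H : Matrix (Fin N) (Fin N) ℂ) (hH : H.IsHermitian)
    (A : Fin N → Matrix (Fin N) (Fin N) ℂ)
    (f : Fin N → ℝ → ℝ)
    (ψ φ ψ' φ' : ℝ → Fin N → ℂ)
    (hψd : ∀ t j, HasDerivAt (fun s => ψ s j) (ψ' t j) t)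
    (hφd : ∀ t j, HasDerivAt (fun s => φ s j) (φ' t j) t)
    (hψeq : ∀ t j, Complex.I * ψ' t j =
      (∑ l, H j l * ψ t l) +
        (f j (‖∑ l, conj (ψ t l) * A j l j‖) : ℂ) * ψ t j)
    (hφeq : ∀ t j, Complex.I * φ' t j =
      (∑ l, H j l * φ t l) +
        (f j (‖∑ l, conj (φ t l) * A j l j‖) : ℂ) * φ t j)
    (t : ℝ) :
    HasDerivAt (fun s => ∑ j, conj (ψ s j) * φ s j)
      (Complex.I * ∑ j,
        ((f j (‖∑ l, conj (ψ t l) * A j l j‖)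
          - f j (‖∑ l, conj (φ t l) * A j l j‖) : ℝ) : ℂ)
          * (conj (ψ t j) * φ t j)) t := by
  rw [← sum_conj_deriv_mul_add_conj_mul_deriv hH (hψeq t) (hφeq t)]
  exact hasDerivAt_sum_conj_mul (hψd t) (hφd t)

/-- For two differentiable solutions `ψ, φ` of the nonlinear
Schrödinger equation on `ℂ^N` (same Hermitian `H`, Hermitian `A j`, functions `f j`),
the overlap `t ↦ ⟨ψ(t)|φ(t)⟩` has derivative
`i · Σ_j [f_j(|⟨ψ|A_j|j⟩|) − f_j(|⟨φ|A_j|j⟩|)] · conj(ψ_j) · φ_j`. -/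
theorem overlap_derivative
    {N : ℕ}
    (H : Matrix (Fin N) (Fin N) ℂ) (hH : H.IsHermitian)
    (A : Fin N → Matrix (Fin N) (Fin N) ℂ) (hA : ∀ j, (A j).IsHermitian)
    (f : Fin N → ℝ → ℝ)
    (ψ φ ψ' φ' : ℝ → Fin N → ℂ)
    (hψd : ∀ t j, HasDerivAt (fun s => ψ s j) (ψ' t j) t)
    (hφd : ∀ t j, HasDerivAt (fun s => φ s j) (φ' t j) t)
    (hψeq : ∀ t j, Complex.I * ψ' t j =
      (∑ l, H j l * ψ t l) +
        (f j (‖∑ l, conj (ψ t l) * A j l j‖) : ℂ) * ψ t j)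
    (hφeq : ∀ t j, Complex.I * φ' t j =
      (∑ l, H j l * φ t l) +
        (f j (‖∑ l, conj (φ t l) * A j l j‖) : ℂ) * φ t j)
    (t : ℝ) :
    HasDerivAt (fun s => ∑ j, conj (ψ s j) * φ s j)
      (Complex.I * ∑ j,
        ((f j (‖∑ l, conj (ψ t l) * A j l j‖)
          - f j (‖∑ l, conj (φ t l) * A j l j‖) : ℝ) : ℂ)
          * (conj (ψ t j) * φ t j)) t :=
  overlap_derivative_general H hH A f ψ φ ψ' φ' hψd hφd hψeq hφeq t
end

section
/- Every differentiable solution ψ : ℝ → (Fin N → ℂ) of the nonlinear Schrödinger equation preserves the norm: for all t ∈ ℝ, Σ_j |ψ_j(t)|² = Σ_j |ψ_j(0)|². -/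
open scoped BigOperators ComplexConjugate

/-!
Differentiating `∑ j, ‖ψ_j‖²` gives `2 ∑ j, re (conj ψ_j · ψ_j')`. Solving the equation for `ψ_j'`,
the self-potential contributes `re (-i · f_j(…) · |ψ_j|²) = 0` because `f_j` is real, so the
derivative is `2 · im ⟨ψ, H ψ⟩`, which vanishes because `H` is Hermitian.
-/

open Complex Matrix

lemma inner_eq_im_of_I_mul_eq {z w h : ℂ} {r : ℝ} (hw : I * w = h + r * z) :
    inner ℝ z w = (conj z * h).im := by
  have hw' : w = -I * (h + r * z) := by
    rw [← hw, ← mul_assoc, neg_mul, I_mul_I, neg_neg, one_mul]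
  rw [Complex.inner, hw']
  simp only [mul_im, mul_re, add_re, add_im, conj_re, conj_im, neg_re, neg_im, I_re, I_im,
    ofReal_re, ofReal_im]
  ring

lemma sum_norm_sq_eq_of_sum_inner_deriv_eq_zero {ι : Type*} [Fintype ι] {ψ ψ' : ℝ → ι → ℂ}
    (hψd : ∀ t j, HasDerivAt (fun s => ψ s j) (ψ' t j) t)
    (h : ∀ t, ∑ j, inner ℝ (ψ t j) (ψ' t j) = 0) (t s : ℝ) :
    ∑ j, ‖ψ t j‖ ^ 2 = ∑ j, ‖ψ s j‖ ^ 2 := by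
  have hderiv : ∀ t, HasDerivAt (fun u => ∑ j, ‖ψ u j‖ ^ 2) 0 t := fun t => by
    simpa only [← Finset.mul_sum, h t, mul_zero] using
      HasDerivAt.fun_sum (u := Finset.univ) fun j _ => (hψd t j).norm_sq
  exact is_const_of_deriv_eq_zero (fun u => (hderiv u).differentiableAt)
    (fun u => (hderiv u).deriv) t s

theorem norm_preservation_general
    {N : ℕ}
    (H : Matrix (Fin N) (Fin N) ℂ) (hH : H.IsHermitian)
    (A : Fin N → Matrix (Fin N) (Fin N) ℂ)
    (f : Fin N → ℝ → ℝ)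
    (ψ ψ' : ℝ → Fin N → ℂ)
    (hψd : ∀ t j, HasDerivAt (fun s => ψ s j) (ψ' t j) t)
    (hψeq : ∀ t j, Complex.I * ψ' t j =
      (∑ l, H j l * ψ t l) +
        (f j ‖∑ l, conj (ψ t l) * A j l j‖ : ℂ) * ψ t j) :
    ∀ t : ℝ, ∑ j, ‖ψ t j‖ ^ 2 = ∑ j, ‖ψ 0 j‖ ^ 2 := by
  refine fun t => sum_norm_sq_eq_of_sum_inner_deriv_eq_zero hψd (fun s => ?_) t 0
  calc ∑ j, inner ℝ (ψ s j) (ψ' s j)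
      = ∑ j, (conj (ψ s j) * (H *ᵥ ψ s) j).im :=
        Finset.sum_congr rfl fun j _ => inner_eq_im_of_I_mul_eq (hψeq s j)
    _ = (star (ψ s) ⬝ᵥ H *ᵥ ψ s).im := by simp only [dotProduct, im_sum, Pi.star_apply, star_def]
    _ = 0 := hH.im_star_dotProduct_mulVec_self (ψ s)

/-- Every differentiable solution of the nonlinear Schrödinger
equation on `ℂ^N` preserves the norm: `Σ_j |ψ_j(t)|² = Σ_j |ψ_j(0)|²` for all `t`. -/
theorem norm_preservation
    {N : ℕ}
    (H : Matrix (Fin N) (Fin N) ℂ) (hH : H.IsHermitian)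
    (A : Fin N → Matrix (Fin N) (Fin N) ℂ) (hA : ∀ j, (A j).IsHermitian)
    (f : Fin N → ℝ → ℝ)
    (ψ ψ' : ℝ → Fin N → ℂ)
    (hψd : ∀ t j, HasDerivAt (fun s => ψ s j) (ψ' t j) t)
    (hψeq : ∀ t j, Complex.I * ψ' t j =
      (∑ l, H j l * ψ t l) +
        (f j ‖∑ l, conj (ψ t l) * A j l j‖ : ℂ) * ψ t j) :
    ∀ t : ℝ, ∑ j, ‖ψ t j‖ ^ 2 = ∑ j, ‖ψ 0 j‖ ^ 2 :=
  norm_preservation_general H hH A f ψ ψ' hψd hψeq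
end

section
/- (Proposition 2) Suppose H_B = diag(b_0,…,b_{N-1}) is a real diagonal matrix (i.e., H_B is diagonal in the basis singled out by the nonlinearity), while H_A is an arbitrary Hermitian matrix. Then for every differentiable solution α of the bipartite nonlinear Schrödinger system, the diagonal entries of Bob's reduced density matrix are constant in time: for every k and every t ∈ ℝ, Σ_j |α_{jk}(t)|² = Σ_j |α_{jk}(0)|². Symmetrically, if H_A is real diagonal and H_B is arbitrary Hermitian, then for every j and t, Σ_k |α_{jk}(t)|² = Σ_k |α_{jk}(0)|². -/
/-!
Fold the diagonal part of the Hamiltonian and the (real, state-dependent) nonlinearity into a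
time-dependent diagonal potential. Each column `α_{·k}` (resp. row `α_{j·}`) then solves a linear
Schrödinger equation `i v' = H(t) v` with `H(t)` Hermitian, and for such an equation
`d/dt ‖v‖² = 2 Im ⟨v, H(t) v⟩ = 0`.
-/

open Matrix

theorem Complex.inner_neg_I_mul (z w : ℂ) :
    inner ℝ z (-Complex.I * w) = (starRingEnd ℂ z * w).im := by
  simp only [Complex.inner, Complex.mul_re, Complex.mul_im, Complex.neg_re, Complex.neg_im,
    Complex.I_re, Complex.I_im, Complex.conj_re, Complex.conj_im]
  ring

section Schrodinger

variable {ι : Type*} [Fintype ι]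

theorem hasDerivAt_sum_norm_sq_eq_zero_of_isHermitian {H : Matrix ι ι ℂ} (hH : H.IsHermitian)
    {v : ℝ → ι → ℂ} {v' : ι → ℂ} {t : ℝ}
    (hv : ∀ i, HasDerivAt (fun s => v s i) (v' i) t)
    (heq : ∀ i, Complex.I * v' i = (H *ᵥ v t) i) :
    HasDerivAt (fun s => ∑ i, ‖v s i‖ ^ 2) 0 t := by
  have hv' : ∀ i, v' i = -Complex.I * (H *ᵥ v t) i := fun i => by
    rw [← heq, ← mul_assoc, neg_mul, Complex.I_mul_I, neg_neg, one_mul]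
  have hderiv : ∑ i, 2 * inner ℝ (v t i) (v' i) = 2 * (star (v t) ⬝ᵥ H *ᵥ v t).im := by
    simp only [hv', Complex.inner_neg_I_mul, dotProduct, Complex.im_sum, Finset.mul_sum,
      Pi.star_apply, RCLike.star_def]
  have hreal : (star (v t) ⬝ᵥ H *ᵥ v t).im = 0 := hH.im_star_dotProduct_mulVec_self (v t)
  rw [← mul_zero 2, ← hreal, ← hderiv]
  exact HasDerivAt.fun_sum fun i _ => (hv i).norm_sq

theorem sum_norm_sq_eq_of_isHermitian {H : ℝ → Matrix ι ι ℂ} (hH : ∀ t, (H t).IsHermitian)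
    {v v' : ℝ → ι → ℂ} (hv : ∀ t i, HasDerivAt (fun s => v s i) (v' t i) t)
    (heq : ∀ t i, Complex.I * v' t i = (H t *ᵥ v t) i) (t : ℝ) :
    ∑ i, ‖v t i‖ ^ 2 = ∑ i, ‖v 0 i‖ ^ 2 := by
  have h0 : ∀ s, HasDerivAt (fun s => ∑ i, ‖v s i‖ ^ 2) 0 s := fun s =>
    hasDerivAt_sum_norm_sq_eq_zero_of_isHermitian (hH s) (hv s) (heq s)
  exact is_const_of_deriv_eq_zero (fun s => (h0 s).differentiableAt) (fun s => (h0 s).deriv) t 0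

end Schrodinger

theorem isHermitian_add_diagonal_ofReal {ι : Type*} [DecidableEq ι] {H : Matrix ι ι ℂ}
    (hH : H.IsHermitian) (d : ι → ℝ) : (H + diagonal fun i => (d i : ℂ)).IsHermitian :=
  hH.add <| isHermitian_diagonal_iff.mpr fun i => Complex.conj_ofReal (d i)

theorem sum_diagonal_ofReal_mul {ι : Type*} [Fintype ι] [DecidableEq ι] (d : ι → ℝ)
    (x : ι → ℂ) (i : ι) : ∑ l, diagonal (fun i => (d i : ℂ)) i l * x l = d i * x i :=
  mulVec_diagonal _ _ _

theorem diagonal_of_reduced_state_constant_general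
    {M N : ℕ}
    (H_A : Matrix (Fin M) (Fin M) ℂ) (H_B : Matrix (Fin N) (Fin N) ℂ)
    (hHA : H_A.IsHermitian) (hHB : H_B.IsHermitian)
    (f : Fin M → Fin N → ℝ → ℝ)
    (α α' : ℝ → Fin M → Fin N → ℂ)
    (hαd : ∀ t j k, HasDerivAt (fun s => α s j k) (α' t j k) t)
    (hαeq : ∀ t j k, Complex.I * α' t j k =
      (∑ l, H_A j l * α t l k) + (∑ m, H_B k m * α t j m) +
      (f j k (‖α t j k‖) : ℂ) * α t j k) :
    ((∃ b : Fin N → ℝ, H_B = Matrix.diagonal fun k => (b k : ℂ)) →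
      ∀ (k : Fin N) (t : ℝ),
        ∑ j, ‖α t j k‖ ^ 2 = ∑ j, ‖α 0 j k‖ ^ 2) ∧
    ((∃ a : Fin M → ℝ, H_A = Matrix.diagonal fun j => (a j : ℂ)) →
      ∀ (j : Fin M) (t : ℝ),
        ∑ k, ‖α t j k‖ ^ 2 = ∑ k, ‖α 0 j k‖ ^ 2) := by
  constructor
  · rintro ⟨b, rfl⟩ k
    refine sum_norm_sq_eq_of_isHermitian
      (fun t => isHermitian_add_diagonal_ofReal hHA fun j => b k + f j k ‖α t j k‖)
      (fun t j => hαd t j k) fun t j => ?_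
    rw [hαeq, add_mulVec, Pi.add_apply, mulVec_diagonal, sum_diagonal_ofReal_mul]
    push_cast [mulVec, dotProduct]
    ring
  · rintro ⟨a, rfl⟩ j
    refine sum_norm_sq_eq_of_isHermitian
      (fun t => isHermitian_add_diagonal_ofReal hHB fun k => a j + f j k ‖α t j k‖)
      (fun t k => hαd t j k) fun t k => ?_
    rw [hαeq, add_mulVec, Pi.add_apply, mulVec_diagonal, sum_diagonal_ofReal_mul]
    push_cast [mulVec, dotProduct]
    ring

/-- **Proposition 2.** If `H_B` is real diagonal in the basis singled
out by the nonlinearity (and `H_A` is an arbitrary Hermitian matrix), then the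
diagonal entries of Bob's reduced density matrix are constant in time:
`Σ_j |α_{jk}(t)|² = Σ_j |α_{jk}(0)|²`. Symmetrically with `A` and `B` exchanged. -/
theorem diagonal_of_reduced_state_constant
    {M N : ℕ} (hM : 1 ≤ M) (hN : 1 ≤ N)
    (H_A : Matrix (Fin M) (Fin M) ℂ) (H_B : Matrix (Fin N) (Fin N) ℂ)
    (hHA : H_A.IsHermitian) (hHB : H_B.IsHermitian)
    (f : Fin M → Fin N → ℝ → ℝ)
    (α α' : ℝ → Fin M → Fin N → ℂ)
    (hαd : ∀ t j k, HasDerivAt (fun s => α s j k) (α' t j k) t)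
    (hαeq : ∀ t j k, Complex.I * α' t j k =
      (∑ l, H_A j l * α t l k) + (∑ m, H_B k m * α t j m) +
      (f j k (‖α t j k‖) : ℂ) * α t j k) :
    ((∃ b : Fin N → ℝ, H_B = Matrix.diagonal fun k => (b k : ℂ)) →
      ∀ (k : Fin N) (t : ℝ),
        ∑ j, ‖α t j k‖ ^ 2 = ∑ j, ‖α 0 j k‖ ^ 2) ∧
    ((∃ a : Fin M → ℝ, H_A = Matrix.diagonal fun j => (a j : ℂ)) →
      ∀ (j : Fin M) (t : ℝ),
        ∑ k, ‖α t j k‖ ^ 2 = ∑ k, ‖α 0 j k‖ ^ 2) :=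
  diagonal_of_reduced_state_constant_general H_A H_B hHA hHB f α α' hαd hαeq
end

section
/- (Proposition 3) Let a, a' ∈ ℝ^M and b ∈ ℝ^N, and let α and α' be differentiable solutions of the bipartite nonlinear Schrödinger systems with real diagonal Hamiltonians H_A = diag(a), H_B = diag(b) and H_A' = diag(a'), H_B' = diag(b) respectively, with the same functions f_{jk} and the same initial data α(0) = α'(0). Then Bob's reduced density matrix does not depend on Alice's local Hamiltonian: for all t, k, k', Σ_j α_{jk}(t)·conj(α_{jk'}(t)) = Σ_j α'_{jk}(t)·conj(α'_{jk'}(t)). -/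
open scoped BigOperators ComplexConjugate

/-!
With diagonal Hamiltonians every amplitude `α j k` obeys its own scalar equation
`i α' = (a j + b k + f j k ‖α‖) α` with a real frequency. Hence `‖α j k‖` is conserved, the
frequency is constant, and `α j k t = exp (-i (a j + b k + f j k ‖α j k 0‖) t) α j k 0`. In
`α j k * conj (α j k')` Alice's phase `exp (-i a j t)` cancels against its conjugate.
-/

open Complex

theorem eq_of_hasDerivAt_zero {E : Type*} [NormedAddCommGroup E] [NormedSpace ℝ E] {g : ℝ → E}
    (hg : ∀ t, HasDerivAt g 0 t) (t s : ℝ) : g t = g s :=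
  is_const_of_deriv_eq_zero (fun x => (hg x).differentiableAt) (fun x => (hg x).deriv) t s

theorem norm_eq_of_hasDerivAt_neg_I_mul {ω : ℝ → ℝ} {g : ℝ → ℂ}
    (hg : ∀ t, HasDerivAt g (-(I * ω t) * g t) t) (t : ℝ) : ‖g t‖ = ‖g 0‖ := by
  have hnormSq : ∀ s, HasDerivAt (fun u => g u * conj (g u)) 0 s := fun s => by
    refine ((hg s).mul (hg s).star).congr_deriv ?_
    simp only [star_def, map_mul, map_neg, conj_I, conj_ofReal]
    ring
  have h := eq_of_hasDerivAt_zero hnormSq t 0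
  rw [mul_conj', mul_conj'] at h
  exact (sq_eq_sq₀ (norm_nonneg _) (norm_nonneg _)).1 (by exact_mod_cast h)

theorem eq_exp_mul_of_hasDerivAt_mul {z : ℂ} {g : ℝ → ℂ} (hg : ∀ t, HasDerivAt g (z * g t) t)
    (t : ℝ) : g t = exp (z * t) * g 0 := by
  have hdamped : ∀ s, HasDerivAt (fun u : ℝ => exp (-z * u) * g u) 0 s := fun s => by
    have hlin : HasDerivAt (fun u : ℝ => -z * u) (-z) s := by
      simpa using (ofRealCLM.hasDerivAt (x := s)).const_mul (-z)
    refine (hlin.cexp.mul (hg s)).congr_deriv ?_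
    ring
  have h := eq_of_hasDerivAt_zero hdamped t 0
  simp only [ofReal_zero, mul_zero, exp_zero, one_mul] at h
  rw [← h, ← mul_assoc, ← exp_add, neg_mul, add_neg_cancel, exp_zero, one_mul]

theorem eq_exp_of_hasDerivAt_neg_I_mul_norm {c : ℝ → ℝ} {g : ℝ → ℂ}
    (hg : ∀ t, HasDerivAt g (-(I * c ‖g t‖) * g t) t) (t : ℝ) :
    g t = exp (-(I * c ‖g 0‖) * t) * g 0 := by
  have hnorm := norm_eq_of_hasDerivAt_neg_I_mul hg
  exact eq_exp_mul_of_hasDerivAt_mul (fun s => hnorm s ▸ hg s) t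

theorem exp_neg_I_mul_mul_conj (θ θ' t : ℝ) :
    exp (-(I * θ) * t) * conj (exp (-(I * θ') * t)) = exp (-(I * ↑(θ - θ')) * t) := by
  rw [← exp_conj, ← exp_add]
  simp only [map_mul, map_neg, conj_I, conj_ofReal]
  congr 1
  push_cast
  ring

section DiagonalSystem

variable {ι κ : Type*} [Fintype ι] [DecidableEq ι] [Fintype κ] [DecidableEq κ]
  (a : ι → ℝ) (b : κ → ℝ) (f : ι → κ → ℝ → ℝ)

def DiagonalNLSEq (α dα : ℝ → ι → κ → ℂ) : Prop :=
  ∀ t j k, I * dα t j k =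
    (∑ l, Matrix.diagonal (fun j => (a j : ℂ)) j l * α t l k) +
    (∑ m, Matrix.diagonal (fun k => (b k : ℂ)) k m * α t j m) +
    (f j k ‖α t j k‖ : ℂ) * α t j k

variable {a b f} {α dα : ℝ → ι → κ → ℂ}

theorem eq_exp_of_diagonal_system
    (hd : ∀ t j k, HasDerivAt (fun s => α s j k) (dα t j k) t)
    (heq : DiagonalNLSEq a b f α dα)
    (t : ℝ) (j : ι) (k : κ) :
    α t j k = exp (-(I * ↑(a j + b k + f j k ‖α 0 j k‖)) * t) * α 0 j k := by
  refine eq_exp_of_hasDerivAt_neg_I_mul_norm (c := fun r => a j + b k + f j k r)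
    (g := fun s => α s j k) (fun s => (hd s j k).congr_deriv ?_) t
  have hs := heq s j k
  simp only [Matrix.diagonal_apply, ite_mul, zero_mul, Finset.sum_ite_eq, Finset.mem_univ,
    if_true] at hs
  push_cast
  linear_combination (-I) * hs + dα s j k * I_sq

theorem mul_conj_eq_of_diagonal_system
    (hd : ∀ t j k, HasDerivAt (fun s => α s j k) (dα t j k) t)
    (heq : DiagonalNLSEq a b f α dα)
    (t : ℝ) (j : ι) (k k' : κ) :
    α t j k * conj (α t j k') =
      exp (-(I * ↑(b k + f j k ‖α 0 j k‖ - (b k' + f j k' ‖α 0 j k'‖))) * t) *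
        (α 0 j k * conj (α 0 j k')) := by
  rw [eq_exp_of_diagonal_system hd heq t j k, eq_exp_of_diagonal_system hd heq t j k',
    map_mul, mul_mul_mul_comm, exp_neg_I_mul_mul_conj, add_assoc, add_assoc,
    add_sub_add_left_eq_sub]

end DiagonalSystem

theorem reduced_state_independent_of_alice_hamiltonian_general
    {M N : ℕ}
    (a a' : Fin M → ℝ) (b : Fin N → ℝ)
    (f : Fin M → Fin N → ℝ → ℝ)
    (α β : ℝ → Fin M → Fin N → ℂ) (dα dβ : ℝ → Fin M → Fin N → ℂ)
    (hαd : ∀ t j k, HasDerivAt (fun s => α s j k) (dα t j k) t)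
    (hαeq : ∀ t j k, Complex.I * dα t j k =
      (∑ l, Matrix.diagonal (fun j => (a j : ℂ)) j l * α t l k) +
      (∑ m, Matrix.diagonal (fun k => (b k : ℂ)) k m * α t j m) +
      (f j k ‖α t j k‖ : ℂ) * α t j k)
    (hβd : ∀ t j k, HasDerivAt (fun s => β s j k) (dβ t j k) t)
    (hβeq : ∀ t j k, Complex.I * dβ t j k =
      (∑ l, Matrix.diagonal (fun j => (a' j : ℂ)) j l * β t l k) +
      (∑ m, Matrix.diagonal (fun k => (b k : ℂ)) k m * β t j m) +
      (f j k ‖β t j k‖ : ℂ) * β t j k)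
    (h0 : α 0 = β 0) :
    ∀ (t : ℝ) (k k' : Fin N),
      ∑ j, α t j k * conj (α t j k') = ∑ j, β t j k * conj (β t j k') := by
  intro t k k'
  refine Finset.sum_congr rfl fun j _ => ?_
  rw [mul_conj_eq_of_diagonal_system hαd hαeq,
    mul_conj_eq_of_diagonal_system hβd hβeq, h0]

/-- **Proposition 3.** For two solutions of the bipartite nonlinear
Schrödinger system with real diagonal Hamiltonians `diag a, diag b` resp.
`diag a', diag b` (same `f`, same initial data), Bob's reduced density matrix is
the same for both: it does not depend on Alice's local Hamiltonian. -/
theorem reduced_state_independent_of_alice_hamiltonian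
    {M N : ℕ} (hM : 1 ≤ M) (hN : 1 ≤ N)
    (a a' : Fin M → ℝ) (b : Fin N → ℝ)
    (f : Fin M → Fin N → ℝ → ℝ)
    (α β : ℝ → Fin M → Fin N → ℂ) (dα dβ : ℝ → Fin M → Fin N → ℂ)
    (hαd : ∀ t j k, HasDerivAt (fun s => α s j k) (dα t j k) t)
    (hαeq : ∀ t j k, Complex.I * dα t j k =
      (∑ l, Matrix.diagonal (fun j => (a j : ℂ)) j l * α t l k) +
      (∑ m, Matrix.diagonal (fun k => (b k : ℂ)) k m * α t j m) +
      (f j k ‖α t j k‖ : ℂ) * α t j k)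
    (hβd : ∀ t j k, HasDerivAt (fun s => β s j k) (dβ t j k) t)
    (hβeq : ∀ t j k, Complex.I * dβ t j k =
      (∑ l, Matrix.diagonal (fun j => (a' j : ℂ)) j l * β t l k) +
      (∑ m, Matrix.diagonal (fun k => (b k : ℂ)) k m * β t j m) +
      (f j k ‖β t j k‖ : ℂ) * β t j k)
    (h0 : α 0 = β 0) :
    ∀ (t : ℝ) (k k' : Fin N),
      ∑ j, α t j k * conj (α t j k') = ∑ j, β t j k * conj (β t j k') :=
  reduced_state_independent_of_alice_hamiltonian_general a a' b f α β dα dβ hαd hαeq hβd hβeq h0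
end

section
/- Suppose H_A = diag(a_0,…,a_{M-1}) and H_B = diag(b_0,…,b_{N-1}) are real diagonal matrices. Then for every differentiable solution α of the bipartite nonlinear Schrödinger system, the entries of Bob's reduced density matrix are given explicitly by (ρ_B(t))_{k k'} = Σ_j α_{jk}(0)·conj(α_{jk'}(0)) · exp( −i·( b_k − b_{k'} + f_{jk}(|α_{jk}(0)|) − f_{jk'}(|α_{jk'}(0)|) )·t ) for all t, k, k'; in particular ρ_B(t) does not depend on the entries a_j of Alice's Hamiltonian. -/
/-!
With diagonal Hamiltonians the system decouples: each amplitude solves the scalar equation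
`α' = -i (a_j + b_k + f_{jk}(|α|)) α`. The coefficient is purely imaginary, so `|α_{jk}|` is
conserved, the nonlinear frequency is frozen at its initial value, and `α_{jk}` is an explicit
exponential. In `α_{jk} conj α_{jk'}` the frequency `a_j` cancels.
-/

open scoped BigOperators ComplexConjugate
open Complex

lemma norm_eq_norm_zero_of_hasDerivAt_neg_I_mul {β : ℝ → ℂ} {c : ℝ → ℝ}
    (hβ : ∀ t, HasDerivAt β (-I * c t * β t) t) (t : ℝ) : ‖β t‖ = ‖β 0‖ := by
  have hderiv : ∀ u, HasDerivAt (fun s => β s * conj (β s)) 0 u := by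
    intro u
    have h := (hβ u).mul (hβ u).star
    simp only [Complex.star_def] at h
    refine h.congr_deriv ?_
    simp only [map_mul, map_neg, conj_I, conj_ofReal]
    ring
  have hconst : β t * conj (β t) = β 0 * conj (β 0) :=
    is_const_of_deriv_eq_zero (fun u => (hderiv u).differentiableAt)
      (fun u => (hderiv u).deriv) t 0
  rw [mul_conj, mul_conj] at hconst
  rw [norm_def, norm_def, ofReal_inj.mp hconst]

lemma eq_mul_cexp_of_hasDerivAt_mul {β : ℝ → ℂ} {μ : ℂ}
    (hβ : ∀ t, HasDerivAt β (μ * β t) t) (t : ℝ) : β t = β 0 * exp (μ * t) := by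
  have hexp : ∀ u : ℝ, HasDerivAt (fun s : ℝ => exp (-μ * s)) (-μ * exp (-μ * u)) u := by
    intro u
    have h := (ofRealCLM.hasDerivAt (x := u)).const_mul (-μ)
    simpa [mul_comm] using h.cexp
  have hderiv : ∀ u, HasDerivAt (fun s : ℝ => β s * exp (-μ * s)) 0 u :=
    fun u => ((hβ u).mul (hexp u)).congr_deriv (by ring)
  have hconst : β t * exp (-μ * t) = β 0 * exp (-μ * (0 : ℝ)) :=
    is_const_of_deriv_eq_zero (fun u => (hderiv u).differentiableAt)
      (fun u => (hderiv u).deriv) t 0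
  rw [ofReal_zero, mul_zero, exp_zero, mul_one] at hconst
  rw [← hconst, mul_assoc, ← exp_add, neg_mul, neg_add_cancel, exp_zero, mul_one]

lemma mul_cexp_mul_conj_mul_cexp (x y : ℂ) (ω ν t : ℝ) :
    x * exp (-I * ω * t) * conj (y * exp (-I * ν * t)) =
      x * conj y * exp (-I * ((ω - ν : ℝ) : ℂ) * t) := by
  rw [map_mul, ← exp_conj, mul_mul_mul_comm, ← exp_add]
  congr 2
  simp only [map_mul, map_neg, conj_I, conj_ofReal, ofReal_sub]
  ring

theorem reduced_state_explicit_formula_general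
    {M N : ℕ}
    (a : Fin M → ℝ) (b : Fin N → ℝ)
    (f : Fin M → Fin N → ℝ → ℝ)
    (α α' : ℝ → Fin M → Fin N → ℂ)
    (hαd : ∀ t j k, HasDerivAt (fun s => α s j k) (α' t j k) t)
    (hαeq : ∀ t j k, Complex.I * α' t j k =
      (∑ l, Matrix.diagonal (fun j => (a j : ℂ)) j l * α t l k) +
      (∑ m, Matrix.diagonal (fun k => (b k : ℂ)) k m * α t j m) +
      (f j k (‖α t j k‖) : ℂ) * α t j k) :
    ∀ (t : ℝ) (k k' : Fin N),
      ∑ j, α t j k * conj (α t j k') =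
        ∑ j, α 0 j k * conj (α 0 j k') *
          Complex.exp (-Complex.I *
            ((b k - b k' + f j k (‖α 0 j k‖)
              - f j k' (‖α 0 j k'‖) : ℝ) : ℂ) * (t : ℂ)) := by
  have hode : ∀ t j k, HasDerivAt (fun s => α s j k)
      (-I * ((a j + b k + f j k ‖α t j k‖ : ℝ) : ℂ) * α t j k) t := by
    intro t j k
    refine (hαd t j k).congr_deriv ?_
    have h := hαeq t j k
    rw [show (∑ l, Matrix.diagonal (fun j => (a j : ℂ)) j l * α t l k) = a j * α t j k from
        Matrix.mulVec_diagonal _ (fun l => α t l k) j,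
      show (∑ m, Matrix.diagonal (fun k => (b k : ℂ)) k m * α t j m) = b k * α t j k from
        Matrix.mulVec_diagonal _ (fun m => α t j m) k] at h
    push_cast
    linear_combination -I * h + α' t j k * I_sq
  have hnorm : ∀ t j k, ‖α t j k‖ = ‖α 0 j k‖ := fun t j k =>
    norm_eq_norm_zero_of_hasDerivAt_neg_I_mul (hode · j k) t
  have hsol : ∀ t j k, α t j k =
      α 0 j k * exp (-I * ((a j + b k + f j k ‖α 0 j k‖ : ℝ) : ℂ) * t) := fun t j k =>
    eq_mul_cexp_of_hasDerivAt_mul (fun s => by simpa only [hnorm s j k] using hode s j k) t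
  intro t k k'
  refine Finset.sum_congr rfl fun j _ => ?_
  rw [hsol t j k, hsol t j k', mul_cexp_mul_conj_mul_cexp]
  congr 5
  ring

/-- If both local Hamiltonians are real diagonal, `H_A = diag(a)`,
`H_B = diag(b)`, the entries of Bob's reduced density matrix are
`(ρ_B(t))_{kk'} = Σ_j α_{jk}(0)·conj(α_{jk'}(0))·exp(−i(b_k − b_{k'} +
f_{jk}(|α_{jk}(0)|) − f_{jk'}(|α_{jk'}(0)|))t)`; in particular `ρ_B(t)` does not
depend on the entries `a_j` of Alice's Hamiltonian. -/
theorem reduced_state_explicit_formula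
    {M N : ℕ} (hM : 1 ≤ M) (hN : 1 ≤ N)
    (a : Fin M → ℝ) (b : Fin N → ℝ)
    (f : Fin M → Fin N → ℝ → ℝ)
    (α α' : ℝ → Fin M → Fin N → ℂ)
    (hαd : ∀ t j k, HasDerivAt (fun s => α s j k) (α' t j k) t)
    (hαeq : ∀ t j k, Complex.I * α' t j k =
      (∑ l, Matrix.diagonal (fun j => (a j : ℂ)) j l * α t l k) +
      (∑ m, Matrix.diagonal (fun k => (b k : ℂ)) k m * α t j m) +
      (f j k (‖α t j k‖) : ℂ) * α t j k) :
    ∀ (t : ℝ) (k k' : Fin N),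
      ∑ j, α t j k * conj (α t j k') =
        ∑ j, α 0 j k * conj (α 0 j k') *
          Complex.exp (-Complex.I *
            ((b k - b k' + f j k (‖α 0 j k‖)
              - f j k' (‖α 0 j k'‖) : ℝ) : ℂ) * (t : ℂ)) :=
  reduced_state_explicit_formula_general a b f α α' hαd hαeq
end

section
/- (Proposition 4) Suppose H_B = diag(b_0,…,b_{N-1}) is a real diagonal matrix and H_A is an arbitrary Hermitian M×M matrix. Let ψ be a differentiable solution of the bipartite nonlinear Schrödinger system, let t₀ ∈ ℝ, and let (P_r)_{r ∈ R} be a finite family of M×M Hermitian idempotent matrices with Σ_r P_r = 𝟙 (the spectral projections of Alice's measured observable). For each r with p_r := Σ_{j,k} |Σ_ℓ (P_r)_{jℓ}·ψ_{ℓk}(t₀)|² > 0, let ξ^r be a differentiable solution of the same system for t ≥ t₀ with initial condition ξ^r_{jk}(t₀) = p_r^{-1/2}·Σ_ℓ (P_r)_{jℓ}·ψ_{ℓk}(t₀). Then for every k and every t ≥ t₀: Σ_{r : p_r > 0} p_r · Σ_j |ξ^r_{jk}(t)|² = Σ_j |ψ_{jk}(t)|² = Σ_j |ψ_{jk}(t₀)|².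 That is, the diagonal entries of Bob's reduced density matrix are constant in time and do not depend on whether Alice's measurement was performed at t₀ or not. -/
/-!
The nonlinear term `f_{jk}(|α_{jk}|) α_{jk}` acts on each column `k` of `α` as the real diagonal
matrix `diag_j f_{jk}(|α_{jk}|)`, and with `H_B` diagonal the column `α_{·k}` evolves on its own
under the Hermitian (time-dependent, state-dependent) matrix `H_A + b_k + diag_j f_{jk}(|α_{jk}|)`.
Its norm, i.e. the diagonal entry `(ρ_B)_{kk}`, is therefore conserved, for `ψ` and for every
collapsed branch `ξ^r`. At `t₀` the branches carry the weights
`p_r ‖ξ^r_{·k}(t₀)‖² = ‖P_r ψ_{·k}(t₀)‖²`, and these add up to `‖ψ_{·k}(t₀)‖²` since the `P_r`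
form a resolution of the identity.
-/

open Matrix

section NormSq

variable {ι : Type*} [Fintype ι]

theorem star_dotProduct_self_eq_sum_sq_norm (v : ι → ℂ) :
    star v ⬝ᵥ v = ((∑ j, ‖v j‖ ^ 2 : ℝ) : ℂ) := by
  simp [dotProduct, Complex.conj_mul']

theorem mul_sum_sq_norm_inv_sqrt_mul {p : ℝ} (hp : 0 < p) (x : ι → ℂ) :
    p * ∑ j, ‖((Real.sqrt p)⁻¹ : ℝ) * x j‖ ^ 2 = ∑ j, ‖x j‖ ^ 2 := by
  simp only [norm_mul, mul_pow, ← Finset.mul_sum, Complex.norm_real, Real.norm_eq_abs, sq_abs,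
    inv_pow, Real.sq_sqrt hp.le, ← mul_assoc, mul_inv_cancel₀ hp.ne', one_mul]

end NormSq

section Projections

variable {ι R : Type*} [Fintype ι] [DecidableEq ι] [Fintype R]

theorem sum_star_mulVec_dotProduct_mulVec {α : Type*} [CommSemiring α] [StarRing α]
    {P : R → Matrix ι ι α} (hP : ∀ r, (P r).IsHermitian) (hPidem : ∀ r, P r * P r = P r)
    (hPsum : ∑ r, P r = 1) (v : ι → α) :
    ∑ r, star (P r *ᵥ v) ⬝ᵥ (P r *ᵥ v) = star v ⬝ᵥ v := by
  have hr : ∀ r, star (P r *ᵥ v) ⬝ᵥ (P r *ᵥ v) = star v ⬝ᵥ (P r *ᵥ v) := fun r => by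
    rw [star_mulVec, ← dotProduct_mulVec, mulVec_mulVec, (hP r).eq, hPidem r]
  simp only [hr, ← dotProduct_sum, ← sum_mulVec, hPsum, one_mulVec]

theorem sum_sum_sq_norm_mulVec {P : R → Matrix ι ι ℂ} (hP : ∀ r, (P r).IsHermitian)
    (hPidem : ∀ r, P r * P r = P r) (hPsum : ∑ r, P r = 1) (v : ι → ℂ) :
    ∑ r, ∑ j, ‖(P r *ᵥ v) j‖ ^ 2 = ∑ j, ‖v j‖ ^ 2 := by
  have := sum_star_mulVec_dotProduct_mulVec hP hPidem hPsum v
  simp only [star_dotProduct_self_eq_sum_sq_norm] at this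
  exact_mod_cast this

end Projections

section Conservation

variable {ι : Type*} [Fintype ι]

theorem Matrix.IsHermitian.re_star_dotProduct_eq_zero_of_I_smul_eq_mulVec {X : Matrix ι ι ℂ}
    (hX : X.IsHermitian) {x w : ι → ℂ} (h : Complex.I • w = X *ᵥ x) :
    (star x ⬝ᵥ w).re = 0 := by
  have hw : w = -Complex.I • (X *ᵥ x) := by
    rw [← h, smul_smul, neg_mul, Complex.I_mul_I, neg_neg, one_smul]
  rw [hw, dotProduct_smul, smul_eq_mul, Complex.mul_re]
  simp [show (star x ⬝ᵥ X *ᵥ x).im = 0 from hX.im_star_dotProduct_mulVec_self x]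

theorem hasDerivAt_star_dotProduct_self {v : ℝ → ι → ℂ} {v' : ι → ℂ} {t : ℝ}
    (hv : HasDerivAt v v' t) :
    HasDerivAt (fun s => star (v s) ⬝ᵥ v s) (star v' ⬝ᵥ v t + star (v t) ⬝ᵥ v') t := by
  have hcoord (j : ι) : HasDerivAt (fun s => star (v s j) * v s j)
      (star (v' j) * v t j + star (v t j) * v' j) t :=
    ((hasDerivAt_pi.1 hv j).star).mul (hasDerivAt_pi.1 hv j)
  simpa only [dotProduct, Pi.star_apply, ← Finset.sum_add_distrib] using
    HasDerivAt.fun_sum fun j _ => hcoord j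

theorem sum_sq_norm_eq_of_schrodinger {v v' : ℝ → ι → ℂ} {X : ℝ → Matrix ι ι ℂ} {t₀ t : ℝ}
    (hv : ∀ s, t₀ ≤ s → HasDerivAt v (v' s) s) (hX : ∀ s, t₀ ≤ s → (X s).IsHermitian)
    (heq : ∀ s, t₀ ≤ s → Complex.I • v' s = X s *ᵥ v s) (ht : t₀ ≤ t) :
    ∑ j, ‖v t j‖ ^ 2 = ∑ j, ‖v t₀ j‖ ^ 2 := by
  have hderiv (s : ℝ) (hs : t₀ ≤ s) : HasDerivAt (fun s => star (v s) ⬝ᵥ v s) 0 s := by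
    have hre := (hX s hs).re_star_dotProduct_eq_zero_of_I_smul_eq_mulVec (heq s hs)
    convert hasDerivAt_star_dotProduct_self (hv s hs) using 1
    rw [star_dotProduct, Complex.star_def, add_comm, Complex.add_conj, hre]
    simp
  have hconst := constant_of_has_deriv_right_zero
    (fun s hs => (hderiv s hs.1).continuousAt.continuousWithinAt)
    (fun s hs => (hderiv s hs.1).hasDerivWithinAt) t ⟨ht, le_rfl⟩
  simp only [star_dotProduct_self_eq_sum_sq_norm] at hconst
  exact_mod_cast hconst

end Conservation

section BipartiteNLS

variable {M N : ℕ}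

noncomputable def columnHamiltonian (H_A : Matrix (Fin M) (Fin M) ℂ) (b : Fin N → ℝ)
    (f : Fin M → Fin N → ℝ → ℝ) (a : Fin M → Fin N → ℂ) (k : Fin N) :
    Matrix (Fin M) (Fin M) ℂ :=
  H_A + diagonal fun j => ((b k + f j k ‖a j k‖ : ℝ) : ℂ)

theorem isHermitian_columnHamiltonian {H_A : Matrix (Fin M) (Fin M) ℂ} (hHA : H_A.IsHermitian)
    (b : Fin N → ℝ) (f : Fin M → Fin N → ℝ → ℝ) (a : Fin M → Fin N → ℂ) (k : Fin N) :
    (columnHamiltonian H_A b f a k).IsHermitian :=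
  hHA.add <| isHermitian_diagonal_of_self_adjoint _ <| funext fun _ => Complex.conj_ofReal _

theorem I_smul_column_eq_columnHamiltonian_mulVec (H_A : Matrix (Fin M) (Fin M) ℂ)
    (b : Fin N → ℝ) (f : Fin M → Fin N → ℝ → ℝ) {a a' : Fin M → Fin N → ℂ}
    (heq : ∀ j k, Complex.I * a' j k =
      (∑ l, H_A j l * a l k) +
      (∑ m, Matrix.diagonal (fun k => (b k : ℂ)) k m * a j m) +
      (f j k (‖a j k‖) : ℂ) * a j k) (k : Fin N) :
    Complex.I • (fun j => a' j k) = columnHamiltonian H_A b f a k *ᵥ fun j => a j k := by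
  ext j
  rw [Pi.smul_apply, smul_eq_mul, heq, columnHamiltonian, add_mulVec, Pi.add_apply,
    mulVec_diagonal]
  simp [mulVec, dotProduct, diagonal_apply, ite_mul, add_mul, add_assoc]

theorem sum_sq_norm_column_eq_of_bipartiteNLS {H_A : Matrix (Fin M) (Fin M) ℂ}
    (hHA : H_A.IsHermitian) (b : Fin N → ℝ) (f : Fin M → Fin N → ℝ → ℝ)
    {α α' : ℝ → Fin M → Fin N → ℂ} {t₀ : ℝ}
    (hd : ∀ t, t₀ ≤ t → ∀ j k, HasDerivAt (fun s => α s j k) (α' t j k) t)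
    (heq : ∀ t, t₀ ≤ t → ∀ j k, Complex.I * α' t j k =
      (∑ l, H_A j l * α t l k) +
      (∑ m, Matrix.diagonal (fun k => (b k : ℂ)) k m * α t j m) +
      (f j k (‖α t j k‖) : ℂ) * α t j k)
    (k : Fin N) {t : ℝ} (ht : t₀ ≤ t) :
    ∑ j, ‖α t j k‖ ^ 2 = ∑ j, ‖α t₀ j k‖ ^ 2 :=
  sum_sq_norm_eq_of_schrodinger (v := fun s j => α s j k)
    (fun s hs => hasDerivAt_pi.2 fun j => hd s hs j k)
    (fun s _ => isHermitian_columnHamiltonian hHA b f (α s) k)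
    (fun s hs => I_smul_column_eq_columnHamiltonian_mulVec H_A b f (heq s hs) k) ht

end BipartiteNLS

/-- **Proposition 4.** Suppose `H_B = diag(b)` is real diagonal and
`H_A` is Hermitian. Let `ψ` solve the bipartite nonlinear Schrödinger system, and
suppose Alice measures at time `t₀` an observable with spectral projections `P_r`;
for each outcome `r` with probability `p_r > 0` let `ξ^r` solve the same system
for `t ≥ t₀` with the collapsed initial condition. Then for every `k` and `t ≥ t₀`
the measurement-averaged diagonal entry of Bob's reduced density matrix equals the
no-measurement one, and both are constant in time:
`Σ_{r : p_r>0} p_r Σ_j |ξ^r_{jk}(t)|² = Σ_j |ψ_{jk}(t)|² = Σ_j |ψ_{jk}(t₀)|²`. -/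
theorem measurement_no_signalling_diagonal
    {M N : ℕ} {R : Type*} [Fintype R]
    (H_A : Matrix (Fin M) (Fin M) ℂ) (hHA : H_A.IsHermitian)
    (b : Fin N → ℝ)
    (f : Fin M → Fin N → ℝ → ℝ)
    (ψ ψ' : ℝ → Fin M → Fin N → ℂ)
    (hψd : ∀ t j k, HasDerivAt (fun s => ψ s j k) (ψ' t j k) t)
    (hψeq : ∀ t j k, Complex.I * ψ' t j k =
      (∑ l, H_A j l * ψ t l k) +
      (∑ m, Matrix.diagonal (fun k => (b k : ℂ)) k m * ψ t j m) +
      (f j k (‖ψ t j k‖) : ℂ) * ψ t j k)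
    (t₀ : ℝ)
    (P : R → Matrix (Fin M) (Fin M) ℂ)
    (hPherm : ∀ r, (P r).IsHermitian)
    (hPidem : ∀ r, P r * P r = P r)
    (hPsum : ∑ r, P r = 1)
    (p : R → ℝ)
    (hp : ∀ r, p r = ∑ j, ∑ k, ‖∑ l, P r j l * ψ t₀ l k‖ ^ 2)
    (ξ ξ' : R → ℝ → Fin M → Fin N → ℂ)
    (hξd : ∀ r, 0 < p r → ∀ t, t₀ ≤ t → ∀ j k,
      HasDerivAt (fun s => ξ r s j k) (ξ' r t j k) t)
    (hξeq : ∀ r, 0 < p r → ∀ t, t₀ ≤ t → ∀ j k,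
      Complex.I * ξ' r t j k =
        (∑ l, H_A j l * ξ r t l k) +
        (∑ m, Matrix.diagonal (fun k => (b k : ℂ)) k m * ξ r t j m) +
        (f j k (‖ξ r t j k‖) : ℂ) * ξ r t j k)
    (hξ0 : ∀ r, 0 < p r → ∀ j k,
      ξ r t₀ j k = (((Real.sqrt (p r))⁻¹ : ℝ) : ℂ) * ∑ l, P r j l * ψ t₀ l k) :
    ∀ (k : Fin N) (t : ℝ), t₀ ≤ t →
      (∑ r ∈ Finset.univ.filter (fun r => 0 < p r),
          p r * ∑ j, ‖ξ r t j k‖ ^ 2)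
        = ∑ j, ‖ψ t j k‖ ^ 2 ∧
      ∑ j, ‖ψ t j k‖ ^ 2 = ∑ j, ‖ψ t₀ j k‖ ^ 2 := by
  intro k t ht
  have hψ := sum_sq_norm_column_eq_of_bipartiteNLS (t₀ := t₀) hHA b f (fun s _ => hψd s)
    (fun s _ => hψeq s) k ht
  set v : Fin M → ℂ := fun l => ψ t₀ l k
  have hbranch (r : R) (hr : 0 < p r) :
      p r * ∑ j, ‖ξ r t j k‖ ^ 2 = ∑ j, ‖(P r *ᵥ v) j‖ ^ 2 := by
    rw [sum_sq_norm_column_eq_of_bipartiteNLS hHA b f (hξd r hr) (hξeq r hr) k ht]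
    simp only [hξ0 r hr]
    exact mul_sum_sq_norm_inv_sqrt_mul hr _
  have hnull (r : R) (hr : ¬ 0 < p r) : ∑ j, ‖(P r *ᵥ v) j‖ ^ 2 = 0 := by
    have hle : ∑ j, ‖(P r *ᵥ v) j‖ ^ 2 ≤ p r := by
      rw [hp r]
      exact Finset.sum_le_sum fun j _ =>
        Finset.single_le_sum (f := fun k' => ‖∑ l, P r j l * ψ t₀ l k'‖ ^ 2)
          (fun _ _ => by positivity) (Finset.mem_univ k)
    exact le_antisymm (hle.trans (not_lt.1 hr)) (by positivity)
  refine ⟨?_, hψ⟩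
  calc ∑ r ∈ Finset.univ.filter (fun r => 0 < p r), p r * ∑ j, ‖ξ r t j k‖ ^ 2
      = ∑ r ∈ Finset.univ.filter (fun r => 0 < p r), ∑ j, ‖(P r *ᵥ v) j‖ ^ 2 :=
        Finset.sum_congr rfl fun r hr => hbranch r (Finset.mem_filter.1 hr).2
    _ = ∑ r, ∑ j, ‖(P r *ᵥ v) j‖ ^ 2 :=
        Finset.sum_filter_of_ne fun r _ h => by_contra fun hr => h (hnull r hr)
    _ = ∑ j, ‖ψ t j k‖ ^ 2 := by
        rw [sum_sum_sq_norm_mulVec hPherm hPidem hPsum, hψ]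
end

section
/- Under purely nonlinear dynamics, the distinguishability from a basis state is constant: suppose H_A = 0 and H_B = 0, and let ψ and φ be differentiable solutions of the bipartite nonlinear Schrödinger system such that ψ(0) is the basis vector e_{j₀k₀}, i.e. ψ_{jk}(0) = 1 if (j,k) = (j₀,k₀) and 0 otherwise. Then the overlap modulus is constant in time: for all t ∈ ℝ, |Σ_{j,k} conj(ψ_{jk}(t))·φ_{jk}(t)| = |φ_{j₀k₀}(0)|. -/
open scoped BigOperators ComplexConjugate

/-!
With `H_A = H_B = 0` the system decouples into scalar equations `i u' = r u` with `r` real, whose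
flow only rotates phases, so every amplitude `|ψ_{jk}|`, `|φ_{jk}|` is conserved. Hence `ψ(t)`
stays supported on `(j₀, k₀)` with `|ψ_{j₀k₀}(t)| = 1`, and the overlap reduces to the single term
`conj ψ_{j₀k₀}(t) · φ_{j₀k₀}(t)`, whose modulus is `|φ_{j₀k₀}(0)|`.
-/

theorem norm_eq_of_I_mul_deriv_eq_real_mul {u d : ℝ → ℂ} {r : ℝ → ℝ}
    (hu : ∀ t, HasDerivAt u (d t) t) (heq : ∀ t, Complex.I * d t = (r t : ℂ) * u t)
    (t s : ℝ) : ‖u t‖ = ‖u s‖ := by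
  have hd : ∀ t, d t = -Complex.I * ((r t : ℂ) * u t) := fun t => by
    rw [← heq t, ← mul_assoc, neg_mul, Complex.I_mul_I, neg_neg, one_mul]
  have hnormSq : ∀ t, HasDerivAt (fun s => conj (u s) * u s) 0 t := fun t => by
    refine ((hu t).star.mul (hu t)).congr_deriv ?_
    simp only [hd t, star_mul', star_neg, Complex.star_def, Complex.conj_I, Complex.conj_ofReal]
    ring
  have hconst : conj (u t) * u t = conj (u s) * u s :=
    is_const_of_deriv_eq_zero (fun x => (hnormSq x).differentiableAt)
      (fun x => (hnormSq x).deriv) t s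
  rw [Complex.conj_mul', Complex.conj_mul'] at hconst
  exact (sq_eq_sq₀ (norm_nonneg _) (norm_nonneg _)).mp (mod_cast hconst)

theorem Fintype.sum_sum_eq_single {ι κ M : Type*} [Fintype ι] [Fintype κ] [AddCommMonoid M]
    {g : ι → κ → M} (i₀ : ι) (k₀ : κ) (hg : ∀ i k, (i, k) ≠ (i₀, k₀) → g i k = 0) :
    ∑ i, ∑ k, g i k = g i₀ k₀ := by
  rw [← Fintype.sum_prod_type']
  exact Fintype.sum_eq_single (i₀, k₀) fun p hp => hg p.1 p.2 hp

/-- Under purely nonlinear dynamics (`H_A = 0`, `H_B = 0`), the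
distinguishability from a basis state is constant: if `ψ(0) = e_{j₀k₀}` then
`|⟨ψ(t)|φ(t)⟩| = |φ_{j₀k₀}(0)|` for all `t`. -/
theorem basis_state_overlap_constant
    {M N : ℕ}
    (H_A : Matrix (Fin M) (Fin M) ℂ) (H_B : Matrix (Fin N) (Fin N) ℂ)
    (hA0 : H_A = 0) (hB0 : H_B = 0)
    (f : Fin M → Fin N → ℝ → ℝ)
    (ψ φ dψ dφ : ℝ → Fin M → Fin N → ℂ)
    (hψd : ∀ t j k, HasDerivAt (fun s => ψ s j k) (dψ t j k) t)
    (hψeq : ∀ t j k, Complex.I * dψ t j k =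
      (∑ l, H_A j l * ψ t l k) + (∑ m, H_B k m * ψ t j m) +
      (f j k (‖ψ t j k‖) : ℂ) * ψ t j k)
    (hφd : ∀ t j k, HasDerivAt (fun s => φ s j k) (dφ t j k) t)
    (hφeq : ∀ t j k, Complex.I * dφ t j k =
      (∑ l, H_A j l * φ t l k) + (∑ m, H_B k m * φ t j m) +
      (f j k (‖φ t j k‖) : ℂ) * φ t j k)
    (j₀ : Fin M) (k₀ : Fin N)
    (hψ0 : ∀ j k, ψ 0 j k = if j = j₀ ∧ k = k₀ then 1 else 0) :
    ∀ t : ℝ,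
      ‖∑ j, ∑ k, conj (ψ t j k) * φ t j k‖
        = ‖φ 0 j₀ k₀‖ := by
  subst hA0 hB0
  have hψnorm : ∀ t j k, ‖ψ t j k‖ = ‖ψ 0 j k‖ := fun t j k =>
    norm_eq_of_I_mul_deriv_eq_real_mul (hψd · j k) (by simpa using hψeq · j k) t 0
  have hφnorm : ∀ t j k, ‖φ t j k‖ = ‖φ 0 j k‖ := fun t j k =>
    norm_eq_of_I_mul_deriv_eq_real_mul (hφd · j k) (by simpa using hφeq · j k) t 0
  intro t
  have hsupport : ∀ j k, (j, k) ≠ (j₀, k₀) → conj (ψ t j k) * φ t j k = 0 := fun j k hjk => by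
    have hψ := hψnorm t j k
    rw [hψ0, if_neg (by simpa using hjk), norm_zero, norm_eq_zero] at hψ
    rw [hψ, map_zero, zero_mul]
  rw [Fintype.sum_sum_eq_single j₀ k₀ hsupport, norm_mul, Complex.norm_conj, hψnorm, hψ0,
    if_pos ⟨rfl, rfl⟩, norm_one, one_mul, hφnorm]
end

section
/- (Gisin–Simon–Bužek theorem, ensemble-independence implies linearity) Let n ≥ 1 and let E be a map assigning to every unit vector ψ ∈ ℂⁿ an n×n complex matrix E(ψ). Assume that E respects ensemble equivalence: for all finite families of weights p_i ≥ 0 with Σ_i p_i = 1 and unit vectors ψ_i, and weights q_m ≥ 0 with Σ_m q_m = 1 and unit vectors φ_m, the equality of density matrices Σ_i p_i·ψ_i ψ_i† = Σ_m q_m·φ_m φ_m† implies Σ_i p_i·E(ψ_i) = Σ_m q_m·E(φ_m). Then there exists a ℂ-linear map L : Matrix n n ℂ → Matrix n n ℂ such that L(ψψ†) = E(ψ) for every unit vector ψ. -/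
/-!
Pure-state projectors `ψψ†` are Hermitian of trace one. Hence a real relation
`∑ rᵢ χᵢχᵢ† = 0` forces `∑ rᵢ = 0`, and splitting `r` into its positive and negative parts and
normalising turns the relation into two ensembles with the same density matrix: `E` satisfies
every real linear relation satisfied by the projectors. Taking Hermitian parts, a complex
relation among the projectors is a pair of real ones, so `E` satisfies every linear relation
among them, which is exactly what is needed for `ψψ† ↦ E ψ` to extend to a linear map.
-/

open scoped ComplexConjugate
open Finset Matrix

theorem LinearMap.exists_comp_eq_of_ker_le {K M V W : Type*} [DivisionRing K]
    [AddCommGroup M] [Module K M] [AddCommGroup V] [Module K V] [AddCommGroup W] [Module K W]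
    (f : M →ₗ[K] V) (g : M →ₗ[K] W) (hfg : ker f ≤ ker g) : ∃ h : V →ₗ[K] W, h ∘ₗ f = g := by
  obtain ⟨s, hs⟩ := ((ker f).liftQ f le_rfl).exists_leftInverse_of_injective
    ((ker f).ker_liftQ_eq_bot f le_rfl le_rfl)
  refine ⟨(ker f).liftQ g hfg ∘ₗ s, LinearMap.ext fun x => ?_⟩
  have hsf : s (f x) = (ker f).mkQ x := LinearMap.congr_fun hs ((ker f).mkQ x)
  simp [hsf]

theorem LinearMap.exists_apply_eq_of_sum_smul_eq_zero {K ι V W : Type*} [DivisionRing K]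
    [AddCommGroup V] [Module K V] [AddCommGroup W] [Module K W] (v : ι → V) (w : ι → W)
    (h : ∀ (k : ℕ) (c : Fin k → K) (x : Fin k → ι),
      ∑ j, c j • v (x j) = 0 → ∑ j, c j • w (x j) = 0) :
    ∃ L : V →ₗ[K] W, ∀ i, L (v i) = w i := by
  obtain ⟨L, hL⟩ := LinearMap.exists_comp_eq_of_ker_le (Finsupp.linearCombination K v)
    (Finsupp.linearCombination K w) fun c hc => by
      simp only [LinearMap.mem_ker, Finsupp.linearCombination_apply, Finsupp.sum] at hc ⊢
      rw [← Finset.sum_coe_sort, ← c.support.equivFin.symm.sum_comp] at hc ⊢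
      exact h _ _ _ hc
  exact ⟨L, fun i => by simpa using LinearMap.congr_fun hL (Finsupp.single i 1)⟩

variable {m : Type*}

def pureState (ψ : m → ℂ) : Matrix m m ℂ := vecMulVec ψ (star ψ)

theorem pureState_apply (ψ : m → ℂ) (j l : m) : pureState ψ j l = ψ j * conj (ψ l) := rfl

theorem isHermitian_pureState (ψ : m → ℂ) : (pureState ψ).IsHermitian := by
  rw [IsHermitian, pureState, conjTranspose_vecMulVec, star_star]

theorem sum_re_smul_eq_zero_of_isHermitian {ι : Type*} [Fintype ι] {c : ι → ℂ}
    {P : ι → Matrix m m ℂ} (hP : ∀ i, (P i).IsHermitian) (h : ∑ i, c i • P i = 0) :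
    ∑ i, ((c i).re : ℂ) • P i = 0 := by
  have hconj : ∑ i, conj (c i) • P i = 0 := by
    simpa [conjTranspose_sum, conjTranspose_smul, (hP _).eq] using congrArg conjTranspose h
  calc ∑ i, ((c i).re : ℂ) • P i = (2 : ℂ)⁻¹ • (∑ i, c i • P i + ∑ i, conj (c i) • P i) := by
        simp only [Complex.re_eq_add_conj, ← sum_add_distrib, ← add_smul, smul_sum, smul_smul,
          div_eq_inv_mul]
    _ = 0 := by rw [h, hconj, add_zero, smul_zero]

variable [Fintype m]

theorem trace_pureState {ψ : m → ℂ} (hψ : ∑ j, ‖ψ j‖ ^ 2 = 1) : (pureState ψ).trace = 1 := by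
  rw [pureState, trace_vecMulVec, dotProduct]
  simp only [Pi.star_apply, RCLike.star_def, Complex.mul_conj, Complex.normSq_eq_norm_sq]
  exact_mod_cast hψ

def RespectsEnsembleEquivalence (E : (m → ℂ) → Matrix m m ℂ) : Prop :=
  ∀ (k l : ℕ) (p : Fin k → ℝ) (ψ : Fin k → m → ℂ) (q : Fin l → ℝ) (φ : Fin l → m → ℂ),
    (∀ i, 0 ≤ p i) → ∑ i, p i = 1 → (∀ i, ∑ j, ‖ψ i j‖ ^ 2 = 1) →
    (∀ i, 0 ≤ q i) → ∑ i, q i = 1 → (∀ i, ∑ j, ‖φ i j‖ ^ 2 = 1) →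
    ∑ i, (p i : ℂ) • pureState (ψ i) = ∑ i, (q i : ℂ) • pureState (φ i) →
    ∑ i, (p i : ℂ) • E (ψ i) = ∑ i, (q i : ℂ) • E (φ i)

theorem sum_posPart_div_smul_sub_sum_negPart_div_smul {ι M : Type*} [Fintype ι]
    [AddCommGroup M] [Module ℂ M] (r : ι → ℝ) (t : ℝ) (X : ι → M) :
    ∑ i, (((r i)⁺ / t : ℝ) : ℂ) • X i - ∑ i, (((r i)⁻ / t : ℝ) : ℂ) • X i
      = (t : ℂ)⁻¹ • ∑ i, (r i : ℂ) • X i := by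
  rw [← sum_sub_distrib, smul_sum]
  refine sum_congr rfl fun i _ => ?_
  rw [← sub_smul, smul_smul, ← Complex.ofReal_sub, ← sub_div, posPart_sub_negPart,
    Complex.ofReal_div, div_eq_inv_mul]

namespace RespectsEnsembleEquivalence

variable {E : (m → ℂ) → Matrix m m ℂ} (hE : RespectsEnsembleEquivalence E)
include hE

theorem sum_ofReal_smul_eq_zero {k : ℕ} (r : Fin k → ℝ) (χ : Fin k → m → ℂ)
    (hχ : ∀ i, ∑ j, ‖χ i j‖ ^ 2 = 1) (hr : ∑ i, (r i : ℂ) • pureState (χ i) = 0) :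
    ∑ i, (r i : ℂ) • E (χ i) = 0 := by
  have hr_sum : ∑ i, r i = 0 := by
    have := congrArg trace hr
    simp only [trace_sum, trace_smul, trace_pureState (hχ _), smul_eq_mul, mul_one,
      trace_zero] at this
    exact_mod_cast this
  set t := ∑ i, (r i)⁺ with ht
  have ht_neg : ∑ i, (r i)⁻ = t := by
    rw [eq_comm, ← sub_eq_zero, ht, ← sum_sub_distrib]
    simpa only [posPart_sub_negPart] using hr_sum
  rcases (sum_nonneg fun i _ => posPart_nonneg (r i) : 0 ≤ t).eq_or_lt with ht0 | ht0
  · have hpos := (sum_eq_zero_iff_of_nonneg fun i _ => posPart_nonneg (r i)).1 ht0.symm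
    have hneg := (sum_eq_zero_iff_of_nonneg fun i _ => negPart_nonneg (r i)).1
      (ht_neg.trans ht0.symm)
    refine sum_eq_zero fun i hi => ?_
    rw [← posPart_sub_negPart (r i), hpos i hi, hneg i hi, sub_zero, Complex.ofReal_zero,
      zero_smul]
  · have key := hE k k (fun i => (r i)⁺ / t) χ (fun i => (r i)⁻ / t) χ
      (fun i => div_nonneg (posPart_nonneg _) ht0.le) (by rw [← sum_div, div_self ht0.ne'])
      hχ (fun i => div_nonneg (negPart_nonneg _) ht0.le)
      (by rw [← sum_div, ht_neg, div_self ht0.ne']) hχ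
      (sub_eq_zero.1 <| by
        rw [sum_posPart_div_smul_sub_sum_negPart_div_smul, hr, smul_zero])
    rw [← sub_eq_zero, sum_posPart_div_smul_sub_sum_negPart_div_smul, smul_eq_zero] at key
    exact key.resolve_left (by simpa using ht0.ne')

theorem sum_smul_eq_zero {k : ℕ} (c : Fin k → ℂ) (χ : Fin k → m → ℂ)
    (hχ : ∀ i, ∑ j, ‖χ i j‖ ^ 2 = 1) (h : ∑ i, c i • pureState (χ i) = 0) :
    ∑ i, c i • E (χ i) = 0 := by
  have hP : ∀ i, (pureState (χ i)).IsHermitian := fun i => isHermitian_pureState _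
  have hre := hE.sum_ofReal_smul_eq_zero (fun i => (c i).re) χ hχ
    (sum_re_smul_eq_zero_of_isHermitian hP h)
  have him := hE.sum_ofReal_smul_eq_zero (fun i => (c i).im) χ hχ <| by
    simpa using sum_re_smul_eq_zero_of_isHermitian (c := fun i => -Complex.I * c i) hP
      (by simp only [mul_smul, ← smul_sum, h, smul_zero])
  calc ∑ i, c i • E (χ i)
      = ∑ i, ((c i).re : ℂ) • E (χ i) + Complex.I • ∑ i, ((c i).im : ℂ) • E (χ i) := by
        simp only [smul_sum, smul_smul, ← sum_add_distrib, ← add_smul, mul_comm Complex.I,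
          Complex.re_add_im]
    _ = 0 := by rw [hre, him, smul_zero, add_zero]

theorem exists_linearMap_pureState_eq : ∃ L : Matrix m m ℂ →ₗ[ℂ] Matrix m m ℂ,
    ∀ ψ : m → ℂ, ∑ j, ‖ψ j‖ ^ 2 = 1 → L (pureState ψ) = E ψ := by
  obtain ⟨L, hL⟩ := LinearMap.exists_apply_eq_of_sum_smul_eq_zero (K := ℂ)
    (fun ψ : {ψ : m → ℂ // ∑ j, ‖ψ j‖ ^ 2 = 1} => pureState ψ.1) (fun ψ => E ψ.1)
    fun _ c x => hE.sum_smul_eq_zero c (fun j => (x j).1) fun j => (x j).2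
  exact ⟨L, fun ψ hψ => hL ⟨ψ, hψ⟩⟩

end RespectsEnsembleEquivalence

theorem ensemble_independence_implies_linearity_general
    {n : ℕ}
    (E : (Fin n → ℂ) → Matrix (Fin n) (Fin n) ℂ)
    (hE : ∀ (k m : ℕ) (p : Fin k → ℝ) (ψ : Fin k → Fin n → ℂ)
        (q : Fin m → ℝ) (φ : Fin m → Fin n → ℂ),
      (∀ i, 0 ≤ p i) → (∑ i, p i) = 1 →
      (∀ i, ∑ j, ‖ψ i j‖ ^ 2 = 1) →
      (∀ i, 0 ≤ q i) → (∑ i, q i) = 1 →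
      (∀ i, ∑ j, ‖φ i j‖ ^ 2 = 1) →
      (∀ (j l : Fin n),
        ∑ i, (p i : ℂ) * (ψ i j * conj (ψ i l))
          = ∑ i, (q i : ℂ) * (φ i j * conj (φ i l))) →
      ∑ i, (p i : ℂ) • E (ψ i) = ∑ i, (q i : ℂ) • E (φ i)) :
    ∃ L : Matrix (Fin n) (Fin n) ℂ →ₗ[ℂ] Matrix (Fin n) (Fin n) ℂ,
      ∀ ψ : Fin n → ℂ, (∑ j, ‖ψ j‖ ^ 2 = 1) →
        L (Matrix.of fun j l => ψ j * conj (ψ l)) = E ψ := by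
  have hE' : RespectsEnsembleEquivalence E :=
    fun k l p ψ q φ hp hp_sum hψ hq hq_sum hφ h => hE k l p ψ q φ hp hp_sum hψ hq hq_sum hφ
      fun j l => by simpa [Matrix.sum_apply, pureState_apply] using congr_fun₂ h j l
  exact hE'.exists_linearMap_pureState_eq

/-- **Gisin–Simon–Bužek.** If a map `E` from unit vectors of `ℂⁿ`
to `n×n` matrices respects ensemble equivalence (equal density matrices give equal
averaged outputs), then there is a ℂ-linear map `L` on matrices with
`L(ψψ†) = E(ψ)` for every unit vector `ψ`. -/
theorem ensemble_independence_implies_linearity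
    {n : ℕ} (hn : 1 ≤ n)
    (E : (Fin n → ℂ) → Matrix (Fin n) (Fin n) ℂ)
    (hE : ∀ (k m : ℕ) (p : Fin k → ℝ) (ψ : Fin k → Fin n → ℂ)
        (q : Fin m → ℝ) (φ : Fin m → Fin n → ℂ),
      (∀ i, 0 ≤ p i) → (∑ i, p i) = 1 →
      (∀ i, ∑ j, ‖ψ i j‖ ^ 2 = 1) →
      (∀ i, 0 ≤ q i) → (∑ i, q i) = 1 →
      (∀ i, ∑ j, ‖φ i j‖ ^ 2 = 1) →
      (∀ (j l : Fin n),
        ∑ i, (p i : ℂ) * (ψ i j * conj (ψ i l))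
          = ∑ i, (q i : ℂ) * (φ i j * conj (φ i l))) →
      ∑ i, (p i : ℂ) • E (ψ i) = ∑ i, (q i : ℂ) • E (φ i)) :
    ∃ L : Matrix (Fin n) (Fin n) ℂ →ₗ[ℂ] Matrix (Fin n) (Fin n) ℂ,
      ∀ ψ : Fin n → ℂ, (∑ j, ‖ψ j‖ ^ 2 = 1) →
        L (Matrix.of fun j l => ψ j * conj (ψ l)) = E ψ :=
  ensemble_independence_implies_linearity_general E hE
end
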